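/- Let N be a positive integer and μ, ε > 0 real. Let D₁, D₂, D₃ be pairwise commuting skew-symmetric real N×N matrices, 𝔻 := [[0, −D₃, D₂], [D₃, 0, −D₁], [−D₂, D₁, 0]] (3N×3N), 𝒟 := (1/√(με))·[[0, −𝔻], [𝔻, 0]] (6N×6N), and for k = 1, 2, 3 let B_k be the block-diagonal 3N×3N matrix with each diagonal block equal to D_k. Given H⁰, E⁰ ∈ ℝ^(3N), define (√μ·H^t, √ε·E^t) = exp(t𝒟)·(√μ·H⁰, √ε·E⁰) and set Ḣ^t := −(1/μ)·𝔻·E^t, Ė^t := (1/ε)·𝔻·H^t. Then for each k = 1, 2, 3 and all t ∈ ℝ: μ·⟨H^t, B_k H^t⟩ + ε·⟨E^t, B_k E^t⟩ = μ·⟨H⁰, B_k H⁰⟩ + ε·⟨E⁰, B_k E⁰⟩, and μ·⟨Ḣ^t, B_k Ḣ^t⟩ + ε·⟨Ė^t, B_k Ė^t⟩ = μ·⟨Ḣ⁰, B_k Ḣ⁰⟩ + ε·⟨Ė⁰, B_k Ė⁰⟩. -/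

import Mathlib

open Matrix

/-- A `3N × 3N` block matrix built from a `3 × 3` array of `N × N` blocks. -/
def blockMat3 {N : ℕ} {α : Type*} (A : Fin 3 → Fin 3 → Matrix (Fin N) (Fin N) α) :
    Matrix (Fin 3 × Fin N) (Fin 3 × Fin N) α :=
  Matrix.of fun p q => A p.1 q.1 p.2 q.2

/-- The `3N × 3N` block-diagonal matrix with each diagonal block equal to `D`. -/
def blockDiag3 {N : ℕ} {α : Type*} [Zero α] (D : Matrix (Fin N) (Fin N) α) :
    Matrix (Fin 3 × Fin N) (Fin 3 × Fin N) α :=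
  Matrix.of fun p q => if p.1 = q.1 then D p.2 q.2 else 0

/-!
The propagator `exp(t𝒟)` is orthogonal because `𝒟` is skew-symmetric, and it commutes with
`diag(M, M)` whenever `M` commutes with the symmetric curl matrix `𝔻`; hence it preserves the
quadratic form of `diag(M, M)`, which in the scaled variables `(√μ H, √ε E)` is the weighted
energy `μ⟨H, M H⟩ + ε⟨E, M E⟩`. The blocks `B_k` commute with `𝔻` because the `D_i` commute,
which gives ℰ₅. Since `𝔻ᵀ = 𝔻`, the energy of `(Ḣ, Ė)` with weight `B_k` is `(με)⁻¹` times the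
energy of `(H, E)` with weight `𝔻 B_k 𝔻`, which also commutes with `𝔻`; this gives ℰ₆.
-/

namespace Matrix

variable {n : Type*}

theorem fromBlocks_transpose_of_isSymm {α : Type*} [AddGroup α] {C : Matrix n n α} (hC : Cᵀ = C) :
    (fromBlocks 0 (-C) C 0)ᵀ = -fromBlocks 0 (-C) C 0 := by
  rw [fromBlocks_transpose, fromBlocks_neg, transpose_neg, hC]
  simp

variable [Fintype n]

theorem mulVec_dotProduct_mulVec_mulVec {R : Type*} [CommSemiring R] (A M : Matrix n n R)
    (x : n → R) : (A *ᵥ x) ⬝ᵥ (M *ᵥ (A *ᵥ x)) = x ⬝ᵥ ((Aᵀ * M * A) *ᵥ x) := by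
  rw [← mulVec_mulVec, ← mulVec_mulVec, dotProduct_mulVec x, vecMul_transpose]

theorem transpose_exp_mul_mul_exp [DecidableEq n] {𝔸 : Type*} [NormedCommRing 𝔸]
    [NormedAlgebra ℚ 𝔸] [CompleteSpace 𝔸] {D P : Matrix n n 𝔸} (hD : Dᵀ = -D) (hPD : Commute P D) :
    (NormedSpace.exp D)ᵀ * P * NormedSpace.exp D = P := by
  have hinv : NormedSpace.exp (-D) * NormedSpace.exp D = 1 := by
    rw [← exp_add_of_commute _ _ (Commute.refl D).neg_left, neg_add_cancel, NormedSpace.exp_zero]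
  rw [← exp_transpose, hD, (hPD.symm.neg_left.exp_left).eq, mul_assoc, hinv, mul_one]

theorem quadForm_exp_mulVec [DecidableEq n] {D P : Matrix n n ℝ} (hD : Dᵀ = -D)
    (hPD : Commute P D) (x : n → ℝ) :
    (NormedSpace.exp D *ᵥ x) ⬝ᵥ (P *ᵥ (NormedSpace.exp D *ᵥ x)) = x ⬝ᵥ (P *ᵥ x) := by
  rw [mulVec_dotProduct_mulVec_mulVec, transpose_exp_mul_mul_exp hD hPD]

theorem quadForm_smul_mulVec {R : Type*} [CommSemiring R] (c : R) (A M : Matrix n n R)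
    (x : n → R) :
    (c • (A *ᵥ x)) ⬝ᵥ (M *ᵥ (c • (A *ᵥ x))) = c * c * (x ⬝ᵥ ((Aᵀ * M * A) *ᵥ x)) := by
  rw [mulVec_smul, dotProduct_smul, smul_dotProduct, mulVec_dotProduct_mulVec_mulVec,
    smul_eq_mul, smul_eq_mul, ← mul_assoc c c]

theorem sumElim_dotProduct_fromBlocks_diagonal_mulVec {R : Type*} [CommSemiring R]
    (M : Matrix n n R) (a b : R) (u v : n → R) :
    Sum.elim (a • u) (b • v) ⬝ᵥ (fromBlocks M 0 0 M *ᵥ Sum.elim (a • u) (b • v)) =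
      a * a * (u ⬝ᵥ (M *ᵥ u)) + b * b * (v ⬝ᵥ (M *ᵥ v)) := by
  simp only [fromBlocks_mulVec, Sum.elim_comp_inl, Sum.elim_comp_inr, zero_mulVec, smul_zero,
    add_zero, zero_add, sumElim_dotProduct_sumElim, mulVec_smul, dotProduct_smul, smul_dotProduct,
    smul_eq_mul, mul_assoc]

theorem commute_fromBlocks_diagonal {α : Type*} [Ring α] {M C : Matrix n n α} (h : Commute M C) :
    Commute (fromBlocks M 0 0 M) (fromBlocks 0 (-C) C 0) := by
  simp only [Commute, SemiconjBy, fromBlocks_multiply, Matrix.mul_neg, Matrix.neg_mul, h.eq,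
    Matrix.zero_mul, Matrix.mul_zero, add_zero, zero_add, neg_zero]

theorem weightedEnergy_eq_of_exp [DecidableEq n] {C M : Matrix n n ℝ} (hC : Cᵀ = C)
    (hMC : Commute M C) {μ ε : ℝ} (hμ : 0 ≤ μ) (hε : 0 ≤ ε) (c : ℝ) {u v u₀ v₀ : n → ℝ}
    (h : Sum.elim (√μ • u) (√ε • v) =
      NormedSpace.exp (c • fromBlocks 0 (-C) C 0) *ᵥ Sum.elim (√μ • u₀) (√ε • v₀)) :
    μ * (u ⬝ᵥ (M *ᵥ u)) + ε * (v ⬝ᵥ (M *ᵥ v)) =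
      μ * (u₀ ⬝ᵥ (M *ᵥ u₀)) + ε * (v₀ ⬝ᵥ (M *ᵥ v₀)) := by
  have hskew : (c • fromBlocks 0 (-C) C 0)ᵀ = -(c • fromBlocks 0 (-C) C 0) := by
    rw [transpose_smul, fromBlocks_transpose_of_isSymm hC, smul_neg]
  have hconserved := quadForm_exp_mulVec hskew ((commute_fromBlocks_diagonal hMC).smul_right c)
    (Sum.elim (√μ • u₀) (√ε • v₀))
  rwa [← h, sumElim_dotProduct_fromBlocks_diagonal_mulVec,
    sumElim_dotProduct_fromBlocks_diagonal_mulVec, Real.mul_self_sqrt hμ,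
    Real.mul_self_sqrt hε] at hconserved

end Matrix

section CurlMatrix

variable {N : ℕ}

theorem blockMat3_transpose {α : Type*} (A : Fin 3 → Fin 3 → Matrix (Fin N) (Fin N) α) :
    (blockMat3 A)ᵀ = blockMat3 fun i j => (A j i)ᵀ := by
  ext ⟨i, a⟩ ⟨j, b⟩
  rfl

theorem blockDiag3_mul_blockMat3 {α : Type*} [NonUnitalNonAssocSemiring α]
    (D : Matrix (Fin N) (Fin N) α) (A : Fin 3 → Fin 3 → Matrix (Fin N) (Fin N) α) :
    blockDiag3 D * blockMat3 A = blockMat3 fun i j => D * A i j := by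
  ext ⟨i, a⟩ ⟨j, b⟩
  simp [mul_apply, blockDiag3, blockMat3, Fintype.sum_prod_type, ite_mul]

theorem blockMat3_mul_blockDiag3 {α : Type*} [NonUnitalNonAssocSemiring α]
    (D : Matrix (Fin N) (Fin N) α) (A : Fin 3 → Fin 3 → Matrix (Fin N) (Fin N) α) :
    blockMat3 A * blockDiag3 D = blockMat3 fun i j => A i j * D := by
  ext ⟨i, a⟩ ⟨j, b⟩
  simp [mul_apply, blockDiag3, blockMat3, Fintype.sum_prod_type, mul_ite]

theorem commute_blockDiag3_blockMat3 {α : Type*} [NonUnitalNonAssocSemiring α]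
    {D : Matrix (Fin N) (Fin N) α} {A : Fin 3 → Fin 3 → Matrix (Fin N) (Fin N) α}
    (h : ∀ i j, Commute D (A i j)) : Commute (blockDiag3 D) (blockMat3 A) := by
  change _ = _
  rw [blockDiag3_mul_blockMat3, blockMat3_mul_blockDiag3]
  exact congrArg blockMat3 (funext₂ fun i j => (h i j).eq)

def curlMatrix {α : Type*} [Zero α] [Neg α] (D1 D2 D3 : Matrix (Fin N) (Fin N) α) :
    Matrix (Fin 3 × Fin N) (Fin 3 × Fin N) α :=
  blockMat3 ![![0, -D3, D2], ![D3, 0, -D1], ![-D2, D1, 0]]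

variable {α : Type*} [Ring α] {D1 D2 D3 : Matrix (Fin N) (Fin N) α}

theorem curlMatrix_transpose (hD1 : D1ᵀ = -D1) (hD2 : D2ᵀ = -D2) (hD3 : D3ᵀ = -D3) :
    (curlMatrix D1 D2 D3)ᵀ = curlMatrix D1 D2 D3 := by
  rw [curlMatrix, blockMat3_transpose]
  congr 1
  funext i j
  fin_cases i <;> fin_cases j <;> simp [hD1, hD2, hD3]

theorem commute_blockDiag3_curlMatrix {D : Matrix (Fin N) (Fin N) α} (h1 : Commute D D1)
    (h2 : Commute D D2) (h3 : Commute D D3) :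
    Commute (blockDiag3 D) (curlMatrix D1 D2 D3) := by
  refine commute_blockDiag3_blockMat3 fun i j => ?_
  fin_cases i <;> fin_cases j <;> simp [h1, h2, h3]

end CurlMatrix

theorem discrete_energy_conservation_E5_E6_general {N : ℕ} (μ ε : ℝ) (hμ : 0 < μ) (hε : 0 < ε)
    (D1 D2 D3 : Matrix (Fin N) (Fin N) ℝ)
    (h12 : D1 * D2 = D2 * D1) (h13 : D1 * D3 = D3 * D1) (h23 : D2 * D3 = D3 * D2)
    (hD1 : D1ᵀ = -D1) (hD2 : D2ᵀ = -D2) (hD3 : D3ᵀ = -D3)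
    (𝔻 : Matrix (Fin 3 × Fin N) (Fin 3 × Fin N) ℝ)
    (h𝔻 : 𝔻 = blockMat3 ![![0, -D3, D2], ![D3, 0, -D1], ![-D2, D1, 0]])
    (𝒟 : Matrix ((Fin 3 × Fin N) ⊕ (Fin 3 × Fin N)) ((Fin 3 × Fin N) ⊕ (Fin 3 × Fin N)) ℝ)
    (h𝒟 : 𝒟 = (Real.sqrt (μ * ε))⁻¹ • Matrix.fromBlocks 0 (-𝔻) 𝔻 0)
    (H E : ℝ → (Fin 3 × Fin N → ℝ))
    (hprop : ∀ t : ℝ,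
      Sum.elim (fun i => Real.sqrt μ * H t i) (fun i => Real.sqrt ε * E t i) =
        (NormedSpace.exp (t • 𝒟)).mulVec
          (Sum.elim (fun i => Real.sqrt μ * H 0 i) (fun i => Real.sqrt ε * E 0 i)))
    (B : Fin 3 → Matrix (Fin 3 × Fin N) (Fin 3 × Fin N) ℝ)
    (hB : ∀ k : Fin 3, B k = blockDiag3 (![D1, D2, D3] k))
    (Hdot Edot : ℝ → (Fin 3 × Fin N → ℝ))
    (hHdot : ∀ t : ℝ, Hdot t = (-(1 / μ)) • 𝔻.mulVec (E t))
    (hEdot : ∀ t : ℝ, Edot t = (1 / ε) • 𝔻.mulVec (H t)) :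
    ∀ k : Fin 3, ∀ t : ℝ,
      (μ * (H t ⬝ᵥ (B k).mulVec (H t)) + ε * (E t ⬝ᵥ (B k).mulVec (E t)) =
        μ * (H 0 ⬝ᵥ (B k).mulVec (H 0)) + ε * (E 0 ⬝ᵥ (B k).mulVec (E 0))) ∧
      (μ * (Hdot t ⬝ᵥ (B k).mulVec (Hdot t)) + ε * (Edot t ⬝ᵥ (B k).mulVec (Edot t)) =
        μ * (Hdot 0 ⬝ᵥ (B k).mulVec (Hdot 0)) + ε * (Edot 0 ⬝ᵥ (B k).mulVec (Edot 0))) := by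
  intro k t
  have h𝔻T : 𝔻ᵀ = 𝔻 := h𝔻 ▸ curlMatrix_transpose hD1 hD2 hD3
  have hB𝔻 : Commute (B k) 𝔻 := by
    rw [hB, h𝔻]
    fin_cases k
    · exact commute_blockDiag3_curlMatrix (.refl _) h12 h13
    · exact commute_blockDiag3_curlMatrix h12.symm (.refl _) h23
    · exact commute_blockDiag3_curlMatrix h13.symm h23.symm (.refl _)
  have conserved : ∀ M, Commute M 𝔻 →
      μ * (H t ⬝ᵥ M *ᵥ H t) + ε * (E t ⬝ᵥ M *ᵥ E t) =
        μ * (H 0 ⬝ᵥ M *ᵥ H 0) + ε * (E 0 ⬝ᵥ M *ᵥ E 0) := fun M hM =>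
    weightedEnergy_eq_of_exp h𝔻T hM hμ.le hε.le (t * (√(μ * ε))⁻¹) <| by
      rw [← smul_smul, ← h𝒟]
      exact hprop t
  have dotEnergy : ∀ s, μ * (Hdot s ⬝ᵥ B k *ᵥ Hdot s) + ε * (Edot s ⬝ᵥ B k *ᵥ Edot s) =
      (μ * ε)⁻¹ * (μ * (H s ⬝ᵥ (𝔻 * B k * 𝔻) *ᵥ H s) + ε * (E s ⬝ᵥ (𝔻 * B k * 𝔻) *ᵥ E s)) := by
    intro s
    rw [hHdot, hEdot, quadForm_smul_mulVec, quadForm_smul_mulVec, h𝔻T]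
    field_simp
    ring
  refine ⟨conserved (B k) hB𝔻, ?_⟩
  rw [dotEnergy, dotEnergy, conserved _ (((Commute.refl 𝔻).mul_left hB𝔻).mul_left (.refl 𝔻))]

/-- the fully discrete exponential scheme exactly conserves the discrete energies ℰ₅ and ℰ₆: `μ⟨Hᵗ, B_k Hᵗ⟩ + ε⟨Eᵗ, B_k Eᵗ⟩` and `μ⟨Ḣᵗ, B_k Ḣᵗ⟩ + ε⟨Ėᵗ, B_k Ėᵗ⟩` are constant in `t` for each `k`. -/
theorem discrete_energy_conservation_E5_E6 {N : ℕ} (hN : 0 < N) (μ ε : ℝ) (hμ : 0 < μ) (hε : 0 < ε)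
    (D1 D2 D3 : Matrix (Fin N) (Fin N) ℝ)
    (h12 : D1 * D2 = D2 * D1) (h13 : D1 * D3 = D3 * D1) (h23 : D2 * D3 = D3 * D2)
    (hD1 : D1ᵀ = -D1) (hD2 : D2ᵀ = -D2) (hD3 : D3ᵀ = -D3)
    (𝔻 : Matrix (Fin 3 × Fin N) (Fin 3 × Fin N) ℝ)
    (h𝔻 : 𝔻 = blockMat3 ![![0, -D3, D2], ![D3, 0, -D1], ![-D2, D1, 0]])
    (𝒟 : Matrix ((Fin 3 × Fin N) ⊕ (Fin 3 × Fin N)) ((Fin 3 × Fin N) ⊕ (Fin 3 × Fin N)) ℝ)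
    (h𝒟 : 𝒟 = (Real.sqrt (μ * ε))⁻¹ • Matrix.fromBlocks 0 (-𝔻) 𝔻 0)
    (H E : ℝ → (Fin 3 × Fin N → ℝ))
    (hprop : ∀ t : ℝ,
      Sum.elim (fun i => Real.sqrt μ * H t i) (fun i => Real.sqrt ε * E t i) =
        (NormedSpace.exp (t • 𝒟)).mulVec
          (Sum.elim (fun i => Real.sqrt μ * H 0 i) (fun i => Real.sqrt ε * E 0 i)))
    (B : Fin 3 → Matrix (Fin 3 × Fin N) (Fin 3 × Fin N) ℝ)
    (hB : ∀ k : Fin 3, B k = blockDiag3 (![D1, D2, D3] k))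
    (Hdot Edot : ℝ → (Fin 3 × Fin N → ℝ))
    (hHdot : ∀ t : ℝ, Hdot t = (-(1 / μ)) • 𝔻.mulVec (E t))
    (hEdot : ∀ t : ℝ, Edot t = (1 / ε) • 𝔻.mulVec (H t)) :
    ∀ k : Fin 3, ∀ t : ℝ,
      (μ * (H t ⬝ᵥ (B k).mulVec (H t)) + ε * (E t ⬝ᵥ (B k).mulVec (E t)) =
        μ * (H 0 ⬝ᵥ (B k).mulVec (H 0)) + ε * (E 0 ⬝ᵥ (B k).mulVec (E 0))) ∧
      (μ * (Hdot t ⬝ᵥ (B k).mulVec (Hdot t)) + ε * (Edot t ⬝ᵥ (B k).mulVec (Edot t)) =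
        μ * (Hdot 0 ⬝ᵥ (B k).mulVec (Hdot 0)) + ε * (Edot 0 ⬝ᵥ (B k).mulVec (Edot 0))) :=
  discrete_energy_conservation_E5_E6_general μ ε hμ hε D1 D2 D3 h12 h13 h23 hD1 hD2 hD3 𝔻 h𝔻 𝒟 h𝒟 H
    E hprop B hB Hdot Edot hHdot hEdot
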